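/- Let L be a positive integer, let x ∈ ℂ, let I_1, …, I_L ∈ ℂ, and let w_0, w_1, …, w_{L−1} ∈ ℂ with w_{L−1} = 1. Define E_1 := x − w_0 I_1 and E_{k+1} := −( w_{k−1} + w_k I_{k+1} ) for k = 1, …, L−1. Let R* be the L×L complex matrix with (k,k) entry I_k for k = 1,…,L−1, (k,k+1) entry 1 for k = 1,…,L−1, last row (E_1, E_2, …, E_{L−1}, I_L + E_L), and all other entries 0. Then det R* = (−1)^{L+1} x. -/

import Mathlib

/-!
Expanding along the first column, whose only nonzero entries are `I 1` on top and `E 1` at the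
bottom, gives `det R*ₙ₊₂(I, E) = I 1 * det R*ₙ₊₁(I ∘ succ, E ∘ succ) + (-1)ⁿ⁺¹ * E 1`: the minor of
the bottom entry is unitriangular. The shifted data `I ∘ succ`, `w ∘ succ`, `E ∘ succ` satisfy the
hypotheses with `x` replaced by `-w 0`, so by induction the first term is `(-1)ⁿ⁺¹ * w 0 * I 1`,
which `E 1 = x - w 0 * I 1` cancels, leaving `(-1)ⁿ⁺¹ * x`.
-/

/-- The `L×L` matrix (2.16): diagonal entries `I 1, …, I (L-1)` in the first `L-1` rows,
entries `1` on the superdiagonal, last row `(E 1, …, E (L-1), I L + E L)`,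
and `0` elsewhere. -/
def RstarM (L : ℕ) (I E : ℕ → ℂ) : Matrix (Fin L) (Fin L) ℂ :=
  Matrix.of fun i j =>
    if (i : ℕ) = L - 1 then
      (if (j : ℕ) = L - 1 then I L + E L else E ((j : ℕ) + 1))
    else if i = j then I ((i : ℕ) + 1)
    else if (i : ℕ) + 1 = (j : ℕ) then 1 else 0

namespace RstarM

variable {n : ℕ} {I E : ℕ → ℂ}

theorem det_one : (RstarM 1 I E).det = I 1 + E 1 := by
  simp [RstarM]

theorem apply_of_lt {i j : Fin (n + 1)} (hi : (i : ℕ) < n) :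
    RstarM (n + 1) I E i j =
      if (j : ℕ) = i then I (i + 1) else if (j : ℕ) = i + 1 then 1 else 0 := by
  simp only [RstarM, Matrix.of_apply, add_tsub_cancel_right, Fin.ext_iff,
    eq_comm (b := (j : ℕ))]
  rw [if_neg hi.ne]

theorem apply_zero_zero : RstarM (n + 2) I E 0 0 = I 1 := by
  rw [apply_of_lt (by simp), if_pos rfl]
  rfl

theorem apply_last_zero : RstarM (n + 2) I E (Fin.last (n + 1)) 0 = E 1 := by
  simp [RstarM]

theorem apply_zero_of_ne {i : Fin (n + 2)} (h0 : i ≠ 0) (hl : i ≠ Fin.last (n + 1)) :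
    RstarM (n + 2) I E i 0 = 0 := by
  rw [Ne, Fin.ext_iff, Fin.val_zero] at h0
  rw [Ne, Fin.ext_iff, Fin.val_last] at hl
  rw [apply_of_lt (by omega), if_neg (by simp; omega), if_neg (by simp)]

theorem submatrix_succ_succ :
    (RstarM (n + 2) I E).submatrix Fin.succ Fin.succ =
      RstarM (n + 1) (fun m => I (m + 1)) (fun m => E (m + 1)) := by
  ext i j
  simp [RstarM]

theorem det_submatrix_castSucc_succ :
    ((RstarM (n + 2) I E).submatrix Fin.castSucc Fin.succ).det = 1 := by
  rw [Matrix.det_of_isLowerTriangular]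
  · refine Finset.prod_eq_one fun i _ => ?_
    rw [Matrix.submatrix_apply, apply_of_lt (by simp; omega), if_neg (by simp), if_pos (by simp)]
  · intro i j (hij : i < j)
    rw [Fin.lt_def] at hij
    rw [Matrix.submatrix_apply, apply_of_lt (by simp; omega), if_neg (by simp; omega),
      if_neg (by simp; omega)]

theorem det_succ_succ :
    (RstarM (n + 2) I E).det =
      I 1 * (RstarM (n + 1) (fun m => I (m + 1)) (fun m => E (m + 1))).det +
        (-1) ^ (n + 1) * E 1 := by
  rw [Matrix.det_succ_column_zero, Finset.sum_eq_add_of_mem 0 (Fin.last (n + 1))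
    (Finset.mem_univ _) (Finset.mem_univ _) (Fin.last_pos).ne
    (fun i _ hi => by rw [apply_zero_of_ne hi.1 hi.2, mul_zero, zero_mul])]
  rw [apply_zero_zero, apply_last_zero, Fin.succAbove_zero, Fin.succAbove_last,
    submatrix_succ_succ, det_submatrix_castSucc_succ]
  simp

theorem det_eq_neg_one_pow_mul (n : ℕ) (x : ℂ) (I w E : ℕ → ℂ) (hw : w n = 1)
    (hE1 : E 1 = x - w 0 * I 1)
    (hEk : ∀ k, 1 ≤ k → k ≤ n → E (k + 1) = -(w (k - 1) + w k * I (k + 1))) :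
    (RstarM (n + 1) I E).det = (-1) ^ n * x := by
  induction n generalizing x I w E with
  | zero =>
    rw [det_one, hE1, hw]
    ring
  | succ n ih =>
    have hshift : (RstarM (n + 1) (fun m => I (m + 1)) (fun m => E (m + 1))).det =
        (-1) ^ n * -w 0 := by
      refine ih (-w 0) _ (fun m => w (m + 1)) _ hw ?_ fun k hk₁ hkn => ?_
      · rw [hEk 1 le_rfl (by omega)]
        ring
      · simpa [Nat.sub_add_cancel hk₁] using hEk (k + 1) (by omega) (by omega)
    rw [det_succ_succ, hshift, hE1]
    ring

end RstarM

/-- second part of Lemma 2.8: with `E_1 = x - w_0 I_1`,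
`E_{k+1} = -(w_{k-1} + w_k I_{k+1})` for `1 ≤ k ≤ L-1`, and `w_{L-1} = 1`,
the determinant telescopes: `det R* = (-1)^{L+1} x`. -/
theorem det_Rstar_eq (L : ℕ) (hL : 0 < L) (x : ℂ) (I w E : ℕ → ℂ)
    (hw : w (L - 1) = 1)
    (hE1 : E 1 = x - w 0 * I 1)
    (hEk : ∀ k : ℕ, 1 ≤ k → k ≤ L - 1 → E (k + 1) = -(w (k - 1) + w k * I (k + 1))) :
    (RstarM L I E).det = (-1 : ℂ) ^ (L + 1) * x := by
  obtain ⟨n, rfl⟩ : ∃ n, L = n + 1 := ⟨L - 1, by omega⟩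
  rw [RstarM.det_eq_neg_one_pow_mul n x I w E hw hE1 hEk]
  ring
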